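/- Let G be a finite connected simple graph with n vertices and m edges, q : D(G) → ℍ a map, U the quaternionic transition matrix determined by q, and W, D_w as below with weight w = q. Suppose there exists an invertible complex 2n×2n matrix P such that P⁻¹·ψ(ᵀW)·P is lower triangular with diagonal entries μ₁, …, μ_{2n} and P⁻¹·ψ(D_w)·P is lower triangular with diagonal entries ξ₁, …, ξ_{2n}. Then for every λ ∈ ℂ, det(λ·I_{4m} − ψ(U)) = (λ² − 1)^{2m−2n} · ∏_{r=1}^{2n} (λ² − λ·μ_r + ξ_r − 1). -/

import Mathlib

noncomputable section

open Matrix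

/-- Simplex part of a quaternion: `q = Sc q + j * Pc q`. -/
def Sc (q : Quaternion ℝ) : ℂ := ⟨q.re, q.imI⟩

/-- Perplex part of a quaternion: `q = Sc q + j * Pc q`. -/
def Pc (q : Quaternion ℝ) : ℂ := ⟨q.imJ, -q.imK⟩

/-- The map ψ sending a quaternionic matrix `M = M^S + j·M^P` (symplectic decomposition)
to the complex block matrix `[[M^S, -conj(M^P)], [M^P, conj(M^S)]]`. -/
def psi {I J : Type*} (M : Matrix I J (Quaternion ℝ)) :
    Matrix (I ⊕ I) (J ⊕ J) ℂ :=
  Matrix.fromBlocks (M.map Sc) (-((M.map Pc).map (starRingEnd ℂ)))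
    (M.map Pc) ((M.map Sc).map (starRingEnd ℂ))

variable {V : Type*}

/-- The quaternionic weighted matrix W: `W u v = w((u,v))` if `(u,v)` is an arc, else 0. -/
def quatWeightMatrix [Fintype V] [DecidableEq V] (G : SimpleGraph V) [DecidableRel G.Adj]
    (w : G.Dart → Quaternion ℝ) : Matrix V V (Quaternion ℝ) := fun u v =>
  if h : G.Adj u v then w ⟨(u, v), h⟩ else 0

/-- The quaternionic weighted arc matrix B_w: `(B_w) e f = w(f)` if `t(e) = o(f)`, else 0. -/
def quatArcMatrix [Fintype V] [DecidableEq V] (G : SimpleGraph V) [DecidableRel G.Adj]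
    (w : G.Dart → Quaternion ℝ) : Matrix G.Dart G.Dart (Quaternion ℝ) := fun e f =>
  if e.toProd.2 = f.toProd.1 then w f else 0

/-- The quaternionic arc-inversion matrix J₀: `(J₀) e f = 1` if `f = e⁻¹`, else 0. -/
def quatArcInvMatrix [Fintype V] [DecidableEq V] (G : SimpleGraph V) [DecidableRel G.Adj] :
    Matrix G.Dart G.Dart (Quaternion ℝ) := fun e f =>
  if f = e.symm then 1 else 0

/-- The quaternionic weighted degree matrix D_w: diagonal with
`(D_w)_{uu} = Σ_{e : o(e) = u} w(e)`. -/
def quatDegMatrix [Fintype V] [DecidableEq V] (G : SimpleGraph V) [DecidableRel G.Adj]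
    (w : G.Dart → Quaternion ℝ) : Matrix V V (Quaternion ℝ) :=
  Matrix.diagonal fun u => ∑ e : G.Dart, if e.toProd.1 = u then w e else 0

/-- The 2m×n matrix K: `K e v = w(e)` if `o(e) = v`, else 0. -/
def quatKMatrix [Fintype V] [DecidableEq V] (G : SimpleGraph V) [DecidableRel G.Adj]
    (w : G.Dart → Quaternion ℝ) : Matrix G.Dart V (Quaternion ℝ) := fun e v =>
  if e.toProd.1 = v then w e else 0

/-- The 2m×n matrix L: `L e v = 1` if `t(e) = v`, else 0. -/
def quatLMatrix [Fintype V] [DecidableEq V] (G : SimpleGraph V) [DecidableRel G.Adj] :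
    Matrix G.Dart V (Quaternion ℝ) := fun e v =>
  if e.toProd.2 = v then 1 else 0

/-- The quaternionic transition matrix determined by `q : D(G) → ℍ`. -/
def quatTransition [Fintype V] [DecidableEq V] (G : SimpleGraph V) [DecidableRel G.Adj]
    (q : G.Dart → Quaternion ℝ) : Matrix G.Dart G.Dart (Quaternion ℝ) := fun e f =>
  if f = e.symm then q e - 1
  else if f.toProd.2 = e.toProd.1 then q e else 0

/-!
Factor the transition matrix as `U = K ᵀL - J₀`, where `J₀` is the matrix of the arc reversal
`e ↦ e⁻¹`; since `ψ` is multiplicative, `ψ U = ψK ψ(ᵀL) - ψJ₀`. Put `Y = λ + ψJ₀`; as `J₀² = 1`,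
`Y (λ - ψJ₀) = (λ² - 1)`, and a block-matrix computation gives
`det (Y - ψK ψ(ᵀL)) (λ² - 1)^{2n} = det Y · det ((λ² - 1) - ψ(ᵀL) (λ - ψJ₀) ψK)`,
in which `ᵀL K = ᵀW` and `ᵀL J₀ K = D_w`. A diagonal ±1 matrix that changes sign along arc
reversal conjugates `J₀` to `-J₀`, whence `det Y = (λ² - 1)^{2m}`. Finally `P` makes the remaining
`2n × 2n` determinant triangular.
-/

section LinearAlgebra

variable {R : Type*} [CommRing R] {α β : Type*} [Fintype α] [Fintype β]
  [DecidableEq α] [DecidableEq β]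

theorem Matrix.det_sub_mul_mul_pow_card {Y Y' : Matrix β β R} {c : R} (hY : Y * Y' = c • 1)
    (K : Matrix β α R) (T : Matrix α β R) :
    (Y - K * T).det * c ^ Fintype.card α = Y.det * (c • 1 - T * Y' * K).det := by
  have hprod : fromBlocks Y K T 1 * fromBlocks 1 (-(Y' * K)) 0 (c • 1) =
      fromBlocks Y 0 T (c • 1 - T * Y' * K) := by
    simp only [fromBlocks_multiply, Matrix.mul_one, Matrix.mul_zero, add_zero, Matrix.mul_neg,
      ← Matrix.mul_assoc, hY, Matrix.smul_mul, Matrix.one_mul, Matrix.mul_smul, neg_add_cancel]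
    congr 1
    abel
  simpa [det_fromBlocks_zero₂₁, det_fromBlocks_zero₁₂, det_smul] using congrArg det hprod

theorem Matrix.smul_one_add_mul_smul_one_sub {J : Matrix β β R} (hJ : J * J = 1) (t : R) :
    (t • 1 + J) * (t • 1 - J) = (t ^ 2 - 1) • (1 : Matrix β β R) := by
  simp only [Matrix.add_mul, Matrix.mul_sub, Matrix.smul_mul, Matrix.mul_smul, Matrix.one_mul,
    Matrix.mul_one, hJ]
  module

theorem Matrix.det_smul_one_add_sq_of_conj_eq_neg {J S : Matrix β β R} (hJ : J * J = 1)
    (hS : S * S = 1) (hSJ : S * J * S = -J) (t : R) :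
    (t • 1 + J).det ^ 2 = (t ^ 2 - 1) ^ Fintype.card β := by
  have hconj : S * (t • 1 + J) * S = t • 1 - J := by
    rw [Matrix.mul_add, Matrix.add_mul, hSJ, Matrix.mul_smul, Matrix.smul_mul, Matrix.mul_one, hS,
      sub_eq_add_neg]
  have hdetS : S.det * S.det = 1 := by rw [← det_mul, hS, det_one]
  have hsign : (t • 1 - J).det = (t • 1 + J).det := by
    rw [← hconj, det_mul, det_mul, mul_right_comm, hdetS, one_mul]
  rw [sq]
  nth_rw 2 [← hsign]
  rw [← det_mul, smul_one_add_mul_smul_one_sub hJ, det_smul, det_one, mul_one]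

theorem Matrix.det_smul_one_add_permMatrix_sq {σ : Equiv.Perm β} (hσ : σ * σ = 1)
    (hfix : ∀ d, σ d ≠ d) (t : R) :
    (t • 1 + σ.permMatrix R).det ^ 2 = (t ^ 2 - 1) ^ Fintype.card β := by
  let e := Fintype.equivFin β
  let s : β → R := fun d => if e d < e (σ d) then 1 else -1
  have hσσ : ∀ d, σ (σ d) = d := fun d => by rw [← Equiv.Perm.mul_apply, hσ, Equiv.Perm.one_apply]
  have hs_sq : ∀ d, s d * s d = 1 := fun d => by dsimp only [s]; split_ifs <;> simp
  have hs_flip : ∀ d, s d * s (σ d) = -1 := fun d => by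
    have hne : e d ≠ e (σ d) := fun h => hfix d (e.injective h).symm
    dsimp only [s]
    rw [hσσ]
    rcases lt_or_gt_of_ne hne with h | h <;> simp [h, h.not_gt]
  refine det_smul_one_add_sq_of_conj_eq_neg (S := diagonal s) ?_ ?_ ?_ t
  · rw [← permMatrix_mul, hσ, permMatrix_one]
  · rw [diagonal_mul_diagonal, ← diagonal_one]
    exact congrArg diagonal (funext hs_sq)
  · ext i j
    simp only [diagonal_mul, mul_diagonal, neg_apply, PEquiv.toMatrix_apply, Equiv.toPEquiv_apply,
      Option.mem_def, Option.some_inj]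
    split_ifs with h
    · subst h; rw [mul_one, hs_flip]
    · simp

theorem Matrix.det_eq_prod_diag_of_lt_imp_eq_zero {ι : Type*} [LinearOrder ι] (M : Matrix β β R)
    {b : β → ι} (hb : Function.Injective b) (h : ∀ r s, b r < b s → M r s = 0) :
    M.det = ∏ r, M r r := by
  let : LinearOrder β := LinearOrder.lift' b hb
  exact det_of_isLowerTriangular M fun r s hrs => h r s hrs

end LinearAlgebra

section Symplectic

theorem Sc_zero : Sc 0 = 0 := rfl

theorem Sc_one : Sc 1 = 1 := rfl

theorem Pc_zero : Pc 0 = 0 := Complex.ext rfl neg_zero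

theorem Pc_one : Pc 1 = 0 := Complex.ext rfl neg_zero

theorem Sc_add (p q : Quaternion ℝ) : Sc (p + q) = Sc p + Sc q := by
  simp [Sc, Complex.ext_iff]

theorem Pc_add (p q : Quaternion ℝ) : Pc (p + q) = Pc p + Pc q := by
  simp [Pc, Complex.ext_iff, add_comm]

theorem Sc_sub (p q : Quaternion ℝ) : Sc (p - q) = Sc p - Sc q :=
  map_sub (AddMonoidHom.mk' Sc Sc_add) p q

theorem Pc_sub (p q : Quaternion ℝ) : Pc (p - q) = Pc p - Pc q :=
  map_sub (AddMonoidHom.mk' Pc Pc_add) p q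

theorem Sc_sum {ι : Type*} (s : Finset ι) (f : ι → Quaternion ℝ) :
    Sc (∑ i ∈ s, f i) = ∑ i ∈ s, Sc (f i) :=
  map_sum (AddMonoidHom.mk' Sc Sc_add) f s

theorem Pc_sum {ι : Type*} (s : Finset ι) (f : ι → Quaternion ℝ) :
    Pc (∑ i ∈ s, f i) = ∑ i ∈ s, Pc (f i) :=
  map_sum (AddMonoidHom.mk' Pc Pc_add) f s

theorem Sc_mul (p q : Quaternion ℝ) :
    Sc (p * q) = Sc p * Sc q - starRingEnd ℂ (Pc p) * Pc q := by
  simp [Sc, Pc, Complex.ext_iff]; constructor <;> ring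

theorem Pc_mul (p q : Quaternion ℝ) :
    Pc (p * q) = starRingEnd ℂ (Sc p) * Pc q + Pc p * Sc q := by
  simp [Sc, Pc, Complex.ext_iff]; constructor <;> ring

variable {I J L : Type*}

theorem psi_sub (M N : Matrix I J (Quaternion ℝ)) : psi (M - N) = psi M - psi N := by
  ext (i | i) (j | j) <;> simp [psi, Sc_sub, Pc_sub, neg_add_eq_sub]

theorem psi_mul [Fintype J] (M : Matrix I J (Quaternion ℝ)) (N : Matrix J L (Quaternion ℝ)) :
    psi (M * N) = psi M * psi N := by
  ext (i | i) (k | k) <;>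
  simp only [psi, fromBlocks_apply₁₁, fromBlocks_apply₁₂, fromBlocks_apply₂₁, fromBlocks_apply₂₂,
    map_map, map_apply, Function.comp_apply, Matrix.neg_apply, mul_apply, Fintype.sum_sum_type,
    Sc_sum, Pc_sum, Sc_mul, Pc_mul, Finset.sum_sub_distrib, Finset.sum_add_distrib,
    Finset.sum_neg_distrib, neg_mul, mul_neg, neg_add_rev, map_add, map_sub, map_sum, map_mul,
    RingHomCompTriple.comp_apply, RingHom.id_apply] <;>
  ring

theorem psi_permMatrix [DecidableEq I] (σ : Equiv.Perm I) :
    psi (σ.permMatrix (Quaternion ℝ)) = fromBlocks (σ.permMatrix ℂ) 0 0 (σ.permMatrix ℂ) := by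
  ext (i | i) (j | j) <;>
    simp [psi, PEquiv.toMatrix_apply, apply_ite Sc, apply_ite Pc, Sc_one, Pc_one, Sc_zero, Pc_zero]

end Symplectic

namespace SimpleGraph

def dartSymm (G : SimpleGraph V) : Equiv.Perm G.Dart :=
  Function.Involutive.toPerm _ Dart.symm_involutive

theorem dartSymm_mul_self (G : SimpleGraph V) : G.dartSymm * G.dartSymm = 1 :=
  Equiv.ext Dart.symm_symm

variable [Fintype V] [DecidableEq V] (G : SimpleGraph V) [DecidableRel G.Adj]
  (q : G.Dart → Quaternion ℝ)

theorem quatArcInvMatrix_eq_permMatrix :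
    quatArcInvMatrix G = G.dartSymm.permMatrix (Quaternion ℝ) := by
  refine Matrix.ext fun e f => ?_
  simp [quatArcInvMatrix, dartSymm, PEquiv.toMatrix_apply, eq_comm]

theorem quatTransition_eq_sub :
    quatTransition G q = quatKMatrix G q * (quatLMatrix G)ᵀ - quatArcInvMatrix G := by
  refine Matrix.ext fun e f => ?_
  by_cases h : f = e.symm
  · subst h
    simp [quatTransition, quatKMatrix, quatLMatrix, quatArcInvMatrix, mul_apply]
  · simp [quatTransition, quatKMatrix, quatLMatrix, quatArcInvMatrix, mul_apply, h, eq_comm]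

theorem transpose_quatLMatrix_mul_quatKMatrix :
    (quatLMatrix G)ᵀ * quatKMatrix G q = (quatWeightMatrix G q)ᵀ := by
  refine Matrix.ext fun u v => ?_
  simp only [quatLMatrix, quatKMatrix, quatWeightMatrix, mul_apply, transpose_apply, ite_mul,
    one_mul, zero_mul, ← ite_and]
  by_cases h : G.Adj v u
  · have hdart : ∀ e : G.Dart, (e.toProd.2 = u ∧ e.toProd.1 = v) ↔ e = ⟨(v, u), h⟩ := fun e => by
      rw [← Dart.toProd_injective.eq_iff, Prod.ext_iff, and_comm]
    simp only [hdart, Finset.sum_ite_eq', Finset.mem_univ, if_true, dif_pos h]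
  · rw [dif_neg h]
    exact Finset.sum_eq_zero fun e _ => if_neg fun ⟨h2, h1⟩ => h (h1 ▸ h2 ▸ e.adj)

theorem transpose_quatLMatrix_mul_quatArcInvMatrix_mul_quatKMatrix :
    (quatLMatrix G)ᵀ * quatArcInvMatrix G * quatKMatrix G q = quatDegMatrix G q := by
  rw [quatArcInvMatrix_eq_permMatrix, Matrix.mul_assoc, PEquiv.toMatrix_toPEquiv_mul]
  refine Matrix.ext fun u v => ?_
  rw [mul_apply, ← Equiv.sum_comp G.dartSymm]
  simp only [dartSymm, Function.Involutive.coe_toPerm, transpose_apply, quatLMatrix,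
    Dart.symm_toProd, Prod.snd_swap, submatrix_apply, quatKMatrix, Dart.symm_symm, id_eq, mul_ite,
    ite_mul, one_mul, zero_mul, mul_zero, quatDegMatrix, diagonal_apply]
  by_cases huv : u = v
  · subst huv
    rw [if_pos rfl]
    exact Finset.sum_congr rfl fun e _ => by split_ifs <;> rfl
  · rw [if_neg huv]
    exact Finset.sum_eq_zero fun e _ => by grind

theorem det_smul_one_sub_psi_quatTransition (lam : ℂ) :
    (lam • (1 : Matrix (G.Dart ⊕ G.Dart) (G.Dart ⊕ G.Dart) ℂ) -
        psi (quatTransition G q)).det * (lam ^ 2 - 1) ^ (2 * Fintype.card V) =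
      (lam ^ 2 - 1) ^ (2 * G.edgeFinset.card) *
        ((lam ^ 2 - 1) • 1 -
          (lam • psi ((quatWeightMatrix G q)ᵀ) - psi (quatDegMatrix G q))).det := by
  set S := G.dartSymm.permMatrix ℂ
  have hJ : psi (quatArcInvMatrix G) = fromBlocks S 0 0 S := by
    rw [quatArcInvMatrix_eq_permMatrix, psi_permMatrix]
  set J := psi (quatArcInvMatrix G)
  have hS : S * S = 1 := by rw [← permMatrix_mul, dartSymm_mul_self, permMatrix_one]
  have hJJ : J * J = 1 := by simp [hJ, fromBlocks_multiply, hS]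
  have hdet : (lam • 1 + J).det = (lam ^ 2 - 1) ^ (2 * G.edgeFinset.card) := by
    have hσ : ∀ e, G.dartSymm e ≠ e := Dart.symm_ne
    rw [hJ, ← fromBlocks_one, fromBlocks_smul, fromBlocks_add, smul_zero, add_zero,
      det_fromBlocks_zero₂₁, ← sq, det_smul_one_add_permMatrix_sq (dartSymm_mul_self G) hσ,
      dart_card_eq_twice_card_edges]
  have hU : lam • 1 - psi (quatTransition G q) =
      (lam • 1 + J) - psi (quatKMatrix G q) * psi ((quatLMatrix G)ᵀ) := by
    rw [quatTransition_eq_sub, psi_sub, psi_mul]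
    abel
  have hmid : psi ((quatLMatrix G)ᵀ) * (lam • 1 - J) * psi (quatKMatrix G q) =
      lam • psi ((quatWeightMatrix G q)ᵀ) - psi (quatDegMatrix G q) := by
    rw [Matrix.mul_sub, Matrix.sub_mul, Matrix.mul_smul, Matrix.mul_one, Matrix.smul_mul,
      ← psi_mul, ← psi_mul, ← psi_mul, transpose_quatLMatrix_mul_quatKMatrix,
      transpose_quatLMatrix_mul_quatArcInvMatrix_mul_quatKMatrix]
  have key := det_sub_mul_mul_pow_card (smul_one_add_mul_smul_one_sub hJJ lam)
    (psi (quatKMatrix G q)) (psi ((quatLMatrix G)ᵀ))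
  rw [hU, ← hdet, ← hmid, two_mul, ← Fintype.card_sum]
  exact key

end SimpleGraph

theorem quat_walk_eigenvalues_general [Fintype V] [DecidableEq V] (G : SimpleGraph V)
    [DecidableRel G.Adj] (n m : ℕ) (hn : n = Fintype.card V)
    (hm : m = G.edgeFinset.card) (q : G.Dart → Quaternion ℝ)
    (P : Matrix (V ⊕ V) (V ⊕ V) ℂ) (hP : IsUnit P.det)
    (b : V ⊕ V → ℕ) (hb : Function.Injective b)
    (hW : ∀ r s : V ⊕ V, b r < b s →
      (P⁻¹ * psi ((quatWeightMatrix G q)ᵀ) * P) r s = 0)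
    (hD : ∀ r s : V ⊕ V, b r < b s →
      (P⁻¹ * psi (quatDegMatrix G q) * P) r s = 0) :
    ∀ lam : ℂ,
      (lam ^ 2 - 1) ^ (2 * n) *
          (lam • (1 : Matrix (G.Dart ⊕ G.Dart) (G.Dart ⊕ G.Dart) ℂ) -
            psi (quatTransition G q)).det =
        (lam ^ 2 - 1) ^ (2 * m) *
          ∏ r : V ⊕ V,
            (lam ^ 2 - lam * (P⁻¹ * psi ((quatWeightMatrix G q)ᵀ) * P) r r +
              (P⁻¹ * psi (quatDegMatrix G q) * P) r r - 1) := by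
  intro lam
  set A := psi ((quatWeightMatrix G q)ᵀ)
  set B := psi (quatDegMatrix G q)
  have hconj : ((lam ^ 2 - 1) • 1 - (lam • A - B)).det =
      ((lam ^ 2 - 1) • 1 - (lam • (P⁻¹ * A * P) - P⁻¹ * B * P)).det := by
    rw [← det_conj' ((isUnit_iff_isUnit_det P).2 hP)]
    congr 1
    simp only [Matrix.mul_sub, Matrix.sub_mul, Matrix.mul_smul, Matrix.smul_mul, Matrix.mul_one,
      nonsing_inv_mul P hP]
  have htri : ((lam ^ 2 - 1) • 1 - (lam • (P⁻¹ * A * P) - P⁻¹ * B * P)).det =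
      ∏ r, (lam ^ 2 - lam * (P⁻¹ * A * P) r r + (P⁻¹ * B * P) r r - 1) := by
    rw [det_eq_prod_diag_of_lt_imp_eq_zero _ hb fun r s hrs => ?_]
    · refine Finset.prod_congr rfl fun r _ => ?_
      simp only [Matrix.sub_apply, Matrix.smul_apply, one_apply_eq, smul_eq_mul, mul_one]
      ring
    · simp [hW r s hrs, hD r s hrs, one_apply_ne (hb.ne_iff.1 hrs.ne)]
  rw [mul_comm, hn, hm, G.det_smul_one_sub_psi_quatTransition, hconj, htri]

/-- Theorem 6.2: suppose P is an invertible complex 2n×2n matrix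
simultaneously lower-triangularizing ψ(ᵀW) and ψ(D_w) (with respect to an arbitrary
linear ordering b of the 2n indices), with diagonal entries μ_r and ξ_r respectively.
Then for every λ ∈ ℂ,
det(λI_{4m} − ψ(U)) = (λ²−1)^{2m−2n}·∏_r (λ² − λμ_r + ξ_r − 1)
(stated multiplied through by (λ²−1)^{2n} to avoid negative exponents). -/
theorem quat_walk_eigenvalues [Fintype V] [DecidableEq V] (G : SimpleGraph V)
    [DecidableRel G.Adj] (hG : G.Connected) (n m : ℕ) (hn : n = Fintype.card V)
    (hm : m = G.edgeFinset.card) (q : G.Dart → Quaternion ℝ)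
    (P : Matrix (V ⊕ V) (V ⊕ V) ℂ) (hP : IsUnit P.det)
    (b : V ⊕ V → ℕ) (hb : Function.Injective b)
    (hW : ∀ r s : V ⊕ V, b r < b s →
      (P⁻¹ * psi ((quatWeightMatrix G q)ᵀ) * P) r s = 0)
    (hD : ∀ r s : V ⊕ V, b r < b s →
      (P⁻¹ * psi (quatDegMatrix G q) * P) r s = 0) :
    ∀ lam : ℂ,
      (lam ^ 2 - 1) ^ (2 * n) *
          (lam • (1 : Matrix (G.Dart ⊕ G.Dart) (G.Dart ⊕ G.Dart) ℂ) -
            psi (quatTransition G q)).det =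
        (lam ^ 2 - 1) ^ (2 * m) *
          ∏ r : V ⊕ V,
            (lam ^ 2 - lam * (P⁻¹ * psi ((quatWeightMatrix G q)ᵀ) * P) r r +
              (P⁻¹ * psi (quatDegMatrix G q) * P) r r - 1) :=
  quat_walk_eigenvalues_general G n m hn hm q P hP b hb hW hD
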